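/- arXiv:1911.05549 — 4 statements merged into one kernel-verified Lean document; each statement's English description precedes it below -/
import Mathlib

section
/- Let R be a henselian local ring with residue field κ and residue map π : R → κ. Let K be a field equipped with a ring homomorphism K → R, and suppose that, via the composite K → R → κ, the field κ is a separable algebraic extension of K. Then R contains a coefficient field: there exists a ring homomorphism σ : κ → R such that π ∘ σ is the identity on κ. -/
/-!
Each `x` in the residue field is a simple root of the reduction of its minimal polynomial over
`K`, so by henselianity that polynomial has a unique root in `R` lifting `x`; call it `σ x`.
A finite subextension of the residue field has a primitive element, whose lift yields a
`K`-algebra map into `R` over the residue map; by uniqueness of lifted roots it agrees with `σ`.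
Any two elements lie in such a subextension, so `σ` is additive and multiplicative.
-/

open Polynomial IsLocalRing

theorem IsLocalRing.eq_of_isRoot_of_residue_eq {R : Type*} [CommRing R] [IsLocalRing R]
    {f : R[X]} {a b : R} (ha : f.IsRoot a) (hb : f.IsRoot b) (hab : residue R a = residue R b)
    (hf' : aeval (residue R a) (derivative f) ≠ 0) : a = b := by
  refine eq_of_eval_eq_zero_of_not_isUnit_sub ha hb ?_ ?_
  · rwa [← residue_ne_zero_iff_isUnit, not_not, map_sub, sub_eq_zero]
  · rwa [← residue_ne_zero_iff_isUnit, ← ResidueField.algebraMap_eq, ← eval₂_at_apply,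
      ← aeval_def]

theorem HenselianLocalRing.existsUnique_isRoot_residue_eq {R : Type*} [CommRing R]
    [HenselianLocalRing R] {f : R[X]} (hf : f.Monic) {x : ResidueField R}
    (hx : aeval x f = 0) (hx' : aeval x (derivative f) ≠ 0) :
    ∃! a : R, f.IsRoot a ∧ residue R a = x := by
  have lift_root := ((HenselianLocalRing.TFAE R).out 0 1).mp ‹_›
  obtain ⟨a, ha, rfl⟩ := lift_root f hf x hx hx'
  exact ⟨a, ⟨ha, rfl⟩, fun b ⟨hb, hba⟩ =>
    (eq_of_isRoot_of_residue_eq ha hb hba.symm hx').symm⟩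

namespace HenselianLocalRing

variable {R : Type*} [CommRing R] [HenselianLocalRing R] (K : Type*) [Field K] [Algebra K R]

theorem existsUnique_isRoot_minpoly_residue_eq {x : ResidueField R} (hx : IsSeparable K x) :
    ∃! a : R, ((minpoly K x).map (algebraMap K R)).IsRoot a ∧ residue R a = x := by
  refine existsUnique_isRoot_residue_eq ((minpoly.monic hx.isIntegral).map _) ?_ ?_
  · rw [aeval_map_algebraMap, minpoly.aeval]
  · rw [derivative_map, aeval_map_algebraMap]
    exact hx.aeval_derivative_ne_zero (minpoly.aeval K x)

theorem exists_algHom_residue_comp_eq (L : Type*) [Field L] [Algebra K L]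
    [FiniteDimensional K L] [Algebra.IsSeparable K L] (ι : L →ₐ[K] ResidueField R) :
    ∃ g : L →ₐ[K] R, (IsScalarTower.toAlgHom K R (ResidueField R)).comp g = ι := by
  let pb := Field.powerBasisOfFiniteOfSeparable K L
  obtain ⟨a, ha, hax⟩ := (existsUnique_isRoot_minpoly_residue_eq K
    ((Algebra.IsSeparable.isSeparable K pb.gen).map ι ι.injective)).exists
  rw [minpoly.algHom_eq ι ι.injective, IsRoot.def, eval_map_algebraMap] at ha
  exact ⟨pb.lift a ha, pb.algHom_ext (by simpa using hax)⟩

variable [Algebra.IsSeparable K (ResidueField R)]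

noncomputable def separableLift (x : ResidueField R) : R :=
  (existsUnique_isRoot_minpoly_residue_eq K (Algebra.IsSeparable.isSeparable K x)).exists.choose

theorem separableLift_spec (x : ResidueField R) :
    ((minpoly K x).map (algebraMap K R)).IsRoot (separableLift K x) ∧
      residue R (separableLift K x) = x :=
  (existsUnique_isRoot_minpoly_residue_eq K
    (Algebra.IsSeparable.isSeparable K x)).exists.choose_spec

theorem residue_separableLift (x : ResidueField R) : residue R (separableLift K x) = x :=
  (separableLift_spec K x).2

theorem eq_separableLift {x : ResidueField R} {a : R}
    (ha : aeval a (minpoly K x) = 0) (hax : residue R a = x) : a = separableLift K x :=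
  (existsUnique_isRoot_minpoly_residue_eq K (Algebra.IsSeparable.isSeparable K x)).unique
    ⟨by rwa [IsRoot.def, eval_map_algebraMap], hax⟩ (separableLift_spec K x)

theorem algHom_apply_eq_separableLift {L : Type*} [Field L] [Algebra K L]
    (ι : L →ₐ[K] ResidueField R) (g : L →ₐ[K] R)
    (hg : (IsScalarTower.toAlgHom K R (ResidueField R)).comp g = ι) (w : L) :
    g w = separableLift K (ι w) := by
  refine eq_separableLift K ?_ (DFunLike.congr_fun hg w)
  rw [minpoly.algHom_eq ι ι.injective, aeval_algHom_apply, minpoly.aeval, map_zero]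

theorem separableLift_algebraMap (c : K) :
    separableLift K (algebraMap K (ResidueField R) c) = algebraMap K R c :=
  (algHom_apply_eq_separableLift K (Algebra.ofId K _) (Algebra.ofId K R)
    (Subsingleton.elim _ _) c).symm

theorem exists_intermediateField_separableLift_eq_algHom (x y : ResidueField R) :
    ∃ (M : IntermediateField K (ResidueField R)) (g : M →ₐ[K] R), x ∈ M ∧ y ∈ M ∧
      ∀ w : M, g w = separableLift K (w : ResidueField R) := by
  let M := IntermediateField.adjoin K {x, y}
  have : FiniteDimensional K M := IntermediateField.finiteDimensional_adjoin_pair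
    (Algebra.IsSeparable.isIntegral K x) (Algebra.IsSeparable.isIntegral K y)
  obtain ⟨g, hg⟩ := exists_algHom_residue_comp_eq K M M.val
  exact ⟨M, g, IntermediateField.subset_adjoin K _ (by simp),
    IntermediateField.subset_adjoin K _ (by simp), algHom_apply_eq_separableLift K M.val g hg⟩

noncomputable def separableLiftRingHom : ResidueField R →+* R where
  toFun := separableLift K
  map_one' := by simpa using separableLift_algebraMap (R := R) K (1 : K)
  map_mul' x y := by
    obtain ⟨M, g, hx, hy, hg⟩ := exists_intermediateField_separableLift_eq_algHom K x y
    rw [← hg ⟨x, hx⟩, ← hg ⟨y, hy⟩, ← map_mul]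
    exact (hg (⟨x, hx⟩ * ⟨y, hy⟩)).symm
  map_zero' := by simpa using separableLift_algebraMap (R := R) K (0 : K)
  map_add' x y := by
    obtain ⟨M, g, hx, hy, hg⟩ := exists_intermediateField_separableLift_eq_algHom K x y
    rw [← hg ⟨x, hx⟩, ← hg ⟨y, hy⟩, ← map_add]
    exact (hg (⟨x, hx⟩ + ⟨y, hy⟩)).symm

theorem residue_comp_separableLiftRingHom :
    (residue R).comp (separableLiftRingHom K) = RingHom.id (ResidueField R) :=
  RingHom.ext (residue_separableLift K)

end HenselianLocalRing

/-- A henselian local ring whose residue field is separable algebraic over a subfield `K`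
contains a coefficient field: a ring-theoretic section of the residue map. -/
theorem henselian_local_ring_exists_coefficient_field
    (R : Type*) [CommRing R] [HenselianLocalRing R]
    (K : Type*) [Field K] (f : K →+* R) :
    letI : Algebra K (IsLocalRing.ResidueField R) :=
      ((IsLocalRing.residue R).comp f).toAlgebra
    ∀ (_ : Algebra.IsAlgebraic K (IsLocalRing.ResidueField R))
      (_ : Algebra.IsSeparable K (IsLocalRing.ResidueField R)),
      ∃ σ : IsLocalRing.ResidueField R →+* R,
        (IsLocalRing.residue R).comp σ = RingHom.id (IsLocalRing.ResidueField R) := by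
  intro _ hsep
  let : Algebra K R := f.toAlgebra
  -- `ResidueField.algebra` built from `f.toAlgebra` is definitionally the algebra of the statement
  have : Algebra.IsSeparable K (ResidueField R) := hsep
  exact ⟨HenselianLocalRing.separableLiftRingHom K,
    HenselianLocalRing.residue_comp_separableLiftRingHom K⟩
end

section
/- Let F be a field and let n and r be natural numbers with r ≤ n. In the polynomial ring F[X₁,…,Xₙ], let P be the ideal generated by the variables X₁,…,X_r. Then P is a prime ideal and the residue map from the localization of F[X₁,…,Xₙ] at P onto its residue field admits a ring-theoretic section: there is a ring homomorphism from the residue field into the localization whose composite with the residue map is the identity (such a section is given by the rational function field F(X_{r+1},…,Xₙ), which sits inside the localization and maps isomorphically onto the residue field). -/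
/-!
If `s : R ⧸ P →+* R` splits the quotient map, then `s` sends nonzero classes outside `P`, so
`R ⧸ P → R → R_P` inverts the nonzero elements of `R ⧸ P` and extends to the residue field
`κ(P) = Frac(R ⧸ P)`, giving a section of the residue map. For `P = (X₁, …, X_r)` in
`F[X₁, …, Xₙ]` such an `s` is induced by setting `X₁, …, X_r` to zero; it also embeds `R ⧸ P`
into a domain, so `P` is prime.
-/

open MvPolynomial IsLocalRing
open scoped nonZeroDivisors

section QuotientSection

variable {R : Type*} [CommRing R] {P : Ideal R} {s : R ⧸ P →+* R}

theorem Ideal.isPrime_of_leftInverse_quotient_mk [IsDomain R] (hP : P ≠ ⊤)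
    (hs : Function.LeftInverse (Ideal.Quotient.mk P) s) : P.IsPrime := by
  have : Nontrivial (R ⧸ P) := Ideal.Quotient.nontrivial_iff.mpr hP
  have : IsDomain (R ⧸ P) := hs.injective.isDomain s
  exact (Ideal.Quotient.isDomain_iff_prime P).mp this

variable [P.IsPrime]

theorem Ideal.mem_primeCompl_of_leftInverse_quotient_mk
    (hs : Function.LeftInverse (Ideal.Quotient.mk P) s) {x : R ⧸ P} (hx : x ≠ 0) :
    s x ∈ P.primeCompl := fun hmem =>
  hx (hs x ▸ Ideal.Quotient.eq_zero_iff_mem.mpr hmem)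

noncomputable def Ideal.ResidueField.sectionOfLeftInverse
    (hs : Function.LeftInverse (Ideal.Quotient.mk P) s) :
    P.ResidueField →+* Localization.AtPrime P :=
  IsLocalization.lift (M := (R ⧸ P)⁰) (g := (algebraMap R (Localization.AtPrime P)).comp s)
    fun y => (IsLocalization.AtPrime.isUnit_to_map_iff _ P _).mpr
      (Ideal.mem_primeCompl_of_leftInverse_quotient_mk hs (nonZeroDivisors.ne_zero y.2))

theorem Ideal.ResidueField.residue_comp_sectionOfLeftInverse
    (hs : Function.LeftInverse (Ideal.Quotient.mk P) s) :
    (residue (Localization.AtPrime P)).comp (sectionOfLeftInverse hs) = RingHom.id _ := by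
  refine IsLocalization.ringHom_ext (R ⧸ P)⁰ <|
    Ideal.Quotient.ringHom_ext <| RingHom.ext fun a => ?_
  simp only [RingHom.comp_apply, sectionOfLeftInverse, IsLocalization.lift_eq,
    RingHom.id_apply]
  rw [Ideal.algebraMap_quotient_residueField_mk, ← ResidueField.algebraMap_eq,
    ← IsScalarTower.algebraMap_apply, ← sub_eq_zero, ← map_sub,
    Ideal.algebraMap_residueField_eq_zero, ← Ideal.Quotient.eq, hs]

end QuotientSection

namespace MvPolynomial

variable {σ R : Type*} [CommRing R] (S : Set σ)

noncomputable def killVars : MvPolynomial σ R →ₐ[R] MvPolynomial σ R :=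
  aeval (Sᶜ.indicator X)

variable {S} in
@[simp]
theorem killVars_X_of_mem {i : σ} (hi : i ∈ S) : killVars S (X i : MvPolynomial σ R) = 0 := by
  simp [killVars, hi]

variable {S} in
@[simp]
theorem killVars_X_of_notMem {i : σ} (hi : i ∉ S) :
    killVars S (X i : MvPolynomial σ R) = X i := by
  simp [killVars, hi]

theorem span_X_image_le_ker_killVars :
    Ideal.span (X '' S) ≤ RingHom.ker (killVars S : MvPolynomial σ R →ₐ[R] _) := by
  rw [Ideal.span_le]
  rintro _ ⟨i, hi, rfl⟩
  simp [hi]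

noncomputable def quotientSpanXImageSection :
    MvPolynomial σ R ⧸ Ideal.span (X '' S : Set (MvPolynomial σ R)) →+* MvPolynomial σ R :=
  Ideal.Quotient.lift _ (killVars S).toRingHom fun _ hp =>
    RingHom.mem_ker.mp (span_X_image_le_ker_killVars S hp)

theorem leftInverse_quotientSpanXImageSection :
    Function.LeftInverse (Ideal.Quotient.mk _)
      (quotientSpanXImageSection S : _ →+* MvPolynomial σ R) := by
  have hcomp : (Ideal.Quotient.mkₐ R (Ideal.span (X '' S))).comp (killVars S) =
      Ideal.Quotient.mkₐ R _ := by
    refine algHom_ext fun i => ?_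
    by_cases hi : i ∈ S
    · rw [AlgHom.comp_apply, killVars_X_of_mem hi, map_zero, eq_comm,
        Ideal.Quotient.mkₐ_eq_mk, Ideal.Quotient.eq_zero_iff_mem]
      exact Ideal.subset_span ⟨i, hi, rfl⟩
    · rw [AlgHom.comp_apply, killVars_X_of_notMem hi]
  intro x
  obtain ⟨p, rfl⟩ := Ideal.Quotient.mk_surjective x
  exact AlgHom.congr_fun hcomp p

theorem span_X_image_ne_top [Nontrivial R] :
    Ideal.span (X '' S : Set (MvPolynomial σ R)) ≠ ⊤ := by
  refine ne_top_of_le_ne_top (RingHom.ker_ne_top (constantCoeff (σ := σ) (R := R))) ?_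
  rw [Ideal.span_le]
  rintro _ ⟨i, -, rfl⟩
  simp

theorem isPrime_span_X_image [IsDomain R] :
    (Ideal.span (X '' S : Set (MvPolynomial σ R))).IsPrime :=
  Ideal.isPrime_of_leftInverse_quotient_mk (span_X_image_ne_top S)
    (leftInverse_quotientSpanXImageSection S)

end MvPolynomial

theorem localization_at_variable_prime_has_coefficient_field_general
    (F : Type*) [Field F] (n r : ℕ)
    (P : Ideal (MvPolynomial (Fin n) F))
    (hP : P = Ideal.span (MvPolynomial.X '' {i : Fin n | (i : ℕ) < r})) :
    ∃ hp : P.IsPrime,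
      ∃ σ : IsLocalRing.ResidueField (Localization.AtPrime P) →+*
              Localization.AtPrime P,
        (IsLocalRing.residue (Localization.AtPrime P)).comp σ =
          RingHom.id (IsLocalRing.ResidueField (Localization.AtPrime P)) := by
  subst hP
  have := isPrime_span_X_image (R := F) {i : Fin n | (i : ℕ) < r}
  exact ⟨this, _, Ideal.ResidueField.residue_comp_sectionOfLeftInverse
    (leftInverse_quotientSpanXImageSection _)⟩

/-- In `F[X₁,…,Xₙ]`, the ideal generated by the first `r` variables is prime, and the
residue map of the localization at this prime admits a ring-theoretic section. -/
theorem localization_at_variable_prime_has_coefficient_field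
    (F : Type*) [Field F] (n r : ℕ) (hr : r ≤ n)
    (P : Ideal (MvPolynomial (Fin n) F))
    (hP : P = Ideal.span (MvPolynomial.X '' {i : Fin n | (i : ℕ) < r})) :
    ∃ hp : P.IsPrime,
      ∃ σ : IsLocalRing.ResidueField (Localization.AtPrime P) →+*
              Localization.AtPrime P,
        (IsLocalRing.residue (Localization.AtPrime P)).comp σ =
          RingHom.id (IsLocalRing.ResidueField (Localization.AtPrime P)) :=
  localization_at_variable_prime_has_coefficient_field_general F n r P hP
end

section
/- Let k be a field and work in the polynomial ring k[x,y] in two variables. Let a, b, c, d be natural numbers with (a,b) ≠ (0,0) and (c,d) ≠ (0,0), and let α, β, γ, δ ∈ k satisfy α·δ − β·γ ≠ 0. If x^a · (γ·x^c + δ·y^d) = y^b · (α·x^c + β·y^d) holds in k[x,y], then a = c and b = d. -/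
/-!
Specialising `y ↦ 1` and `x ↦ 1` turns the identity into the one-variable identities
`t^a (γ t^c + δ) = α t^c + β` and `t^b (β t^d + α) = δ t^d + γ`, both with determinant
`α δ - β γ`. In one variable, comparing the coefficients at `0`, `a`, `c` and `a + c` shows that
`a ≠ c` would force the determinant to vanish.
-/

open MvPolynomial

theorem Polynomial.eq_of_X_pow_mul_eq_of_det_ne_zero {R : Type*} [CommRing R] {a c : ℕ}
    {α β γ δ : R} (hdet : α * δ - β * γ ≠ 0)
    (h : X ^ a * (C γ * X ^ c + C δ) = C α * X ^ c + C β) : a = c := by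
  have hcoeff n : (if n = a + c then γ else 0) + (if n = a then δ else 0) =
      (if n = c then α else 0) + (if n = 0 then β else 0) := by
    have h' : C γ * X ^ (a + c) + C δ * X ^ a = C α * X ^ c + C β := by rw [← h]; ring
    simpa [coeff_C_mul_X_pow, coeff_C] using congrArg (coeff · n) h'
  by_contra hac
  apply hdet
  -- Depending on whether `a = 0`, `c = 0` or neither, these coefficients give
  -- `(γ, δ) = (α, β)`, or `γ + δ = α + β = 0`, or `β = γ = δ = 0`.
  grind [hcoeff 0, hcoeff a, hcoeff c, hcoeff (a + c)]

theorem monomial_fractional_linear_rigidity_general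
    (k : Type*) [Field k] (a b c d : ℕ)
    (α β γ δ : k) (h : α * δ - β * γ ≠ 0)
    (heq : (X 0 : MvPolynomial (Fin 2) k) ^ a * (C γ * X 0 ^ c + C δ * X 1 ^ d) =
      (X 1 : MvPolynomial (Fin 2) k) ^ b * (C α * X 0 ^ c + C β * X 1 ^ d)) :
    a = c ∧ b = d := by
  have hx := congrArg (aeval (![Polynomial.X, 1] : Fin 2 → Polynomial k)) heq
  have hy := congrArg (aeval (![1, Polynomial.X] : Fin 2 → Polynomial k)) heq
  simp only [map_mul, map_pow, map_add, aeval_X, algHom_C, Polynomial.algebraMap_eq,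
    Matrix.cons_val_zero, Matrix.cons_val_one, one_pow, mul_one, one_mul] at hx hy
  refine ⟨Polynomial.eq_of_X_pow_mul_eq_of_det_ne_zero h hx,
    Polynomial.eq_of_X_pow_mul_eq_of_det_ne_zero (α := δ) (β := γ) (γ := β) (δ := α) ?_ ?_⟩
  · rwa [mul_comm δ, mul_comm γ]
  · linear_combination -hy

/-- If `x^a/y^b` and `x^c/y^d` are related by a fractional linear transformation
(in cross-multiplied polynomial form), then `(a, b) = (c, d)`. -/
theorem monomial_fractional_linear_rigidity
    (k : Type*) [Field k] (a b c d : ℕ)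
    (hab : (a, b) ≠ (0, 0)) (hcd : (c, d) ≠ (0, 0))
    (α β γ δ : k) (h : α * δ - β * γ ≠ 0)
    (heq : (X 0 : MvPolynomial (Fin 2) k) ^ a * (C γ * X 0 ^ c + C δ * X 1 ^ d) =
      (X 1 : MvPolynomial (Fin 2) k) ^ b * (C α * X 0 ^ c + C β * X 1 ^ d)) :
    a = c ∧ b = d :=
  monomial_fractional_linear_rigidity_general k a b c d α β γ δ h heq
end

section
/- Let R be a henselian local integral domain that is integrally closed in its fraction field and whose residue field is algebraically closed of characteristic zero. Let a and b be coprime positive integers and let r₀, r ∈ R. If there exists a unit u of R with r₀^a = u·r^b, then r₀ admits a b-th root in R: there exists s ∈ R with s^b = r₀. -/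
/-! Hensel's lemma applied to `X ^ b - u` makes the unit `u` a `b`-th power `v ^ b`, so
`(v * r) ^ b = r₀ ^ a`. As `a` and `b` are coprime, `r₀` is then a `b`-th power in the fraction
field, and that root is integral over `R`, hence lies in `R`. -/

open Polynomial IsLocalRing

theorem HenselianLocalRing.exists_pow_eq_of_isUnit {R : Type*} [CommRing R]
    [HenselianLocalRing R] [IsSepClosed (ResidueField R)] {n : ℕ}
    (hn : (n : ResidueField R) ≠ 0) {u : R} (hu : IsUnit u) : ∃ v : R, v ^ n = u := by
  have hn₀ : n ≠ 0 := by rintro rfl; exact hn Nat.cast_zero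
  have : NeZero (n : ResidueField R) := ⟨hn⟩
  obtain ⟨c, hc⟩ := IsSepClosed.exists_pow_nat_eq (residue R u) n
  obtain ⟨v₀, rfl⟩ := residue_surjective c
  have hv₀ : residue R v₀ ≠ 0 := by
    rintro h
    rw [h, zero_pow hn₀] at hc
    exact (residue_ne_zero_iff_isUnit u).mpr hu hc.symm
  obtain ⟨v, hv, -⟩ := HenselianLocalRing.is_henselian (X ^ n - C u)
    (monic_X_pow_sub_C u hn₀) v₀ (by rw [← residue_eq_zero_iff]; simp [hc])
    (by rw [← residue_ne_zero_iff_isUnit]; simp [derivative_X_pow, hn, hv₀])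
  exact ⟨v, by simpa [sub_eq_zero] using hv⟩

theorem IsIntegrallyClosed.exists_pow_eq_of_pow_eq_pow_of_coprime {R : Type*} [CommRing R]
    [IsDomain R] [IsIntegrallyClosed R] {x y : R} {m n : ℕ} (hn : 0 < n) (hmn : m.Coprime n)
    (h : x ^ n = y ^ m) : ∃ s : R, s ^ n = y := by
  let φ := algebraMap R (FractionRing R)
  have hφ : φ x ^ n = φ y ^ m := by simp only [← map_pow, h]
  obtain ⟨c, -, hc⟩ := (pow_eq_pow_iff_of_coprime hmn.symm).mp hφ
  obtain ⟨s, rfl⟩ := exists_algebraMap_eq_of_isIntegral_pow (R := R) hn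
    (hc ▸ isIntegral_algebraMap : IsIntegral R (c ^ n))
  exact ⟨s, IsFractionRing.injective R (FractionRing R) (by simp [φ, hc])⟩

theorem henselian_root_extraction_general
    (R : Type*) [CommRing R] [IsDomain R] [HenselianLocalRing R] [IsIntegrallyClosed R]
    [IsAlgClosed (IsLocalRing.ResidueField R)] [CharZero (IsLocalRing.ResidueField R)]
    (a b : ℕ) (hb : 0 < b) (hab : Nat.Coprime a b)
    (r₀ r : R) (u : Rˣ) (hu : r₀ ^ a = (u : R) * r ^ b) :
    ∃ s : R, s ^ b = r₀ := by
  obtain ⟨v, hv⟩ := HenselianLocalRing.exists_pow_eq_of_isUnit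
    (Nat.cast_ne_zero.mpr hb.ne' : (b : ResidueField R) ≠ 0) u.isUnit
  refine IsIntegrallyClosed.exists_pow_eq_of_pow_eq_pow_of_coprime (x := v * r) hb hab ?_
  rw [mul_pow, hv, hu]

/-- In an integrally closed henselian local domain with algebraically closed residue field
of characteristic zero, if `r₀^a` is a unit multiple of `r^b` with `a, b` coprime and
positive, then `r₀` admits a `b`-th root. -/
theorem henselian_root_extraction
    (R : Type*) [CommRing R] [IsDomain R] [HenselianLocalRing R] [IsIntegrallyClosed R]
    [IsAlgClosed (IsLocalRing.ResidueField R)] [CharZero (IsLocalRing.ResidueField R)]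
    (a b : ℕ) (ha : 0 < a) (hb : 0 < b) (hab : Nat.Coprime a b)
    (r₀ r : R) (u : Rˣ) (hu : r₀ ^ a = (u : R) * r ^ b) :
    ∃ s : R, s ^ b = r₀ :=
  henselian_root_extraction_general R a b hb hab r₀ r u hu
end
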